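/- Sobolev inequality for periodic functions: if x : ℝ → ℝ is a continuously differentiable T-periodic function, then ‖x − x̄‖∞ ≤ √(T/12) · ‖x'‖_{L²(0,T)}, where x̄ = (1/T)·∫₀ᵀ x(t) dt and ‖x'‖_{L²(0,T)} = (∫₀ᵀ x'(t)² dt)^{1/2}. Consequently ‖x − x̄‖∞ ≤ (T/(2√3))·‖x'‖∞. -/

import Mathlib

open Real MeasureTheory

/-! Integrating by parts against the sawtooth `k(s) = (s - t)/T - 1/2` on `[t, t + T]`, whose
slope is `1/T` and whose boundary values are `∓1/2`, gives `x t - x̄ = ∫ₜ^{t+T} k x'` by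
periodicity. Cauchy–Schwarz bounds this by `‖k‖₂ ‖x'‖₂`, and `∫ₜ^{t+T} k² = T/12`.
The sup-norm bound follows from `‖x'‖₂² ≤ T ‖x'‖∞²`. -/

theorem abs_integral_mul_le_sqrt_mul_sqrt {α : Type*} [MeasurableSpace α] {μ : Measure α}
    {f g : α → ℝ} (hf : Integrable (fun a => f a ^ 2) μ) (hg : Integrable (fun a => g a ^ 2) μ)
    (hfg : Integrable (fun a => f a * g a) μ) :
    |∫ a, f a * g a ∂μ| ≤ √(∫ a, f a ^ 2 ∂μ) * √(∫ a, g a ^ 2 ∂μ) := by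
  set A := ∫ a, f a ^ 2 ∂μ
  set B := ∫ a, g a ^ 2 ∂μ
  set C := ∫ a, f a * g a ∂μ
  -- the quadratic `λ ↦ ∫ (λ g - f)²` is nonnegative, so its discriminant is not positive
  have hquad : ∀ l : ℝ, 0 ≤ B * (l * l) + (-2 * C) * l + A := fun l => by
    have hexp : (fun a => (l * g a - f a) ^ 2)
        = fun a => (l * l) * g a ^ 2 + (-2 * l) * (f a * g a) + f a ^ 2 := by
      ext a; ring
    have h : 0 ≤ ∫ a, (l * g a - f a) ^ 2 ∂μ := integral_nonneg fun a => sq_nonneg _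
    rw [hexp, integral_add _ hf, integral_add (hg.const_mul _) (hfg.const_mul _),
      integral_const_mul, integral_const_mul] at h
    · linarith
    · exact (hg.const_mul _).add (hfg.const_mul _)
  have hC : C ^ 2 ≤ A * B := by
    have := discrim_le_zero hquad
    rw [discrim] at this
    nlinarith
  calc |C| = √(C ^ 2) := (sqrt_sq_eq_abs C).symm
    _ ≤ √(A * B) := sqrt_le_sqrt hC
    _ = √A * √B := sqrt_mul (integral_nonneg fun a => sq_nonneg (f a)) B

theorem Function.Periodic.deriv {f : ℝ → ℝ} {c : ℝ} (hf : Function.Periodic f c) :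
    Function.Periodic (deriv f) c := fun t => by
  rw [← deriv_comp_add_const, funext hf]

noncomputable def sawtooth (T t s : ℝ) : ℝ := (s - t) / T - 1 / 2

theorem hasDerivAt_sawtooth (T t s : ℝ) : HasDerivAt (sawtooth T t) T⁻¹ s :=
  ((((hasDerivAt_id s).sub_const t).div_const T).sub_const (1 / 2)).congr_deriv (one_div T)

theorem continuous_sawtooth (T t : ℝ) : Continuous (sawtooth T t) := by
  unfold sawtooth; fun_prop

theorem sawtooth_self (T t : ℝ) : sawtooth T t t = -(1 / 2) := by
  simp [sawtooth]

theorem sawtooth_add_self {T : ℝ} (hT : T ≠ 0) (t : ℝ) : sawtooth T t (t + T) = 1 / 2 := by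
  rw [sawtooth, add_sub_cancel_left, div_self hT]
  norm_num

theorem integral_sawtooth_sq {T : ℝ} (hT : T ≠ 0) (t : ℝ) :
    ∫ s in t..t + T, sawtooth T t s ^ 2 = T / 12 := by
  have hanti : ∀ s, HasDerivAt (fun s => T / 3 * sawtooth T t s ^ 3) (sawtooth T t s ^ 2) s :=
    fun s => (((hasDerivAt_sawtooth T t s).pow 3).const_mul (T / 3)).congr_deriv (by
      field_simp; norm_num)
  rw [intervalIntegral.integral_eq_sub_of_hasDerivAt (fun s _ => hanti s)
    (((continuous_sawtooth T t).pow 2).intervalIntegrable _ _), sawtooth_add_self hT,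
    sawtooth_self]
  ring

theorem sub_mean_eq_integral_sawtooth_mul_deriv {x : ℝ → ℝ} {T : ℝ}
    (hper : Function.Periodic x T) (hT : T ≠ 0) (hx : ContDiff ℝ 1 x) (t : ℝ) :
    x t - (1 / T) * ∫ s in (0:ℝ)..T, x s = ∫ s in t..t + T, sawtooth T t s * deriv x s := by
  have hibp := intervalIntegral.integral_deriv_mul_eq_sub (a := t) (b := t + T)
    (fun s _ => hasDerivAt_sawtooth T t s) (fun s _ => (hx.differentiable one_ne_zero s).hasDerivAt)
    intervalIntegrable_const ((hx.continuous_deriv le_rfl).intervalIntegrable _ _)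
  rw [intervalIntegral.integral_add, intervalIntegral.integral_const_mul, sawtooth_add_self hT,
    sawtooth_self, hper t, hper.intervalIntegral_add_eq t 0, zero_add] at hibp
  · rw [one_div]
    linarith
  · exact (hx.continuous.const_mul _).intervalIntegrable _ _
  · exact ((continuous_sawtooth T t).mul (hx.continuous_deriv le_rfl)).intervalIntegrable _ _

theorem abs_sub_mean_le_sqrt_mul_sqrt_integral_deriv_sq {x : ℝ → ℝ} {T : ℝ}
    (hper : Function.Periodic x T) (hT : 0 < T) (hx : ContDiff ℝ 1 x) (t : ℝ) :
    |x t - (1 / T) * ∫ s in (0:ℝ)..T, x s| ≤ √(T / 12) * √(∫ s in (0:ℝ)..T, deriv x s ^ 2) := by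
  have hx' : Continuous (deriv x) := hx.continuous_deriv le_rfl
  calc |x t - (1 / T) * ∫ s in (0:ℝ)..T, x s|
      = |∫ s in t..t + T, sawtooth T t s * deriv x s| := by
        rw [sub_mean_eq_integral_sawtooth_mul_deriv hper hT.ne' hx]
    _ ≤ √(∫ s in t..t + T, sawtooth T t s ^ 2) * √(∫ s in t..t + T, deriv x s ^ 2) := by
        simp only [intervalIntegral.integral_of_le (by linarith : t ≤ t + T)]
        exact abs_integral_mul_le_sqrt_mul_sqrt
          ((continuous_sawtooth T t).pow 2).integrableOn_Ioc (hx'.pow 2).integrableOn_Ioc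
          ((continuous_sawtooth T t).mul hx').integrableOn_Ioc
    _ = √(T / 12) * √(∫ s in (0:ℝ)..T, deriv x s ^ 2) := by
        have hsq : Function.Periodic (fun s => deriv x s ^ 2) T := hper.deriv.comp (· ^ 2)
        rw [integral_sawtooth_sq hT.ne', hsq.intervalIntegral_add_eq t 0, zero_add]

theorem sqrt_div_twelve_mul_sqrt_mul_sq {T M : ℝ} (hT : 0 ≤ T) (hM : 0 ≤ M) :
    √(T / 12) * √(T * M ^ 2) = T / (2 * √3) * M := by
  rw [← sqrt_mul (by positivity), show T / 12 * (T * M ^ 2) = (T * M) ^ 2 / (2 ^ 2 * 3) by ring,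
    sqrt_div' _ (by norm_num), sqrt_mul (by norm_num), sqrt_sq (by positivity),
    sqrt_sq (by norm_num)]
  ring

/-- Sobolev inequality for `T`-periodic `C¹` functions:
`‖x - x̄‖∞ ≤ √(T/12) ‖x'‖_{L²(0,T)}`, and consequently `‖x - x̄‖∞ ≤ (T/(2√3)) ‖x'‖∞`. -/
theorem periodic_sobolev_inequality (T : ℝ) (hT : 0 < T) (x : ℝ → ℝ)
    (hper : Function.Periodic x T) (hC1 : ContDiff ℝ 1 x) :
    (∀ t : ℝ, |x t - (1 / T) * ∫ τ in (0:ℝ)..T, x τ|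
      ≤ Real.sqrt (T / 12) * Real.sqrt (∫ τ in (0:ℝ)..T, (deriv x τ) ^ 2)) ∧
    (∀ M : ℝ, (∀ τ : ℝ, |deriv x τ| ≤ M) →
      ∀ t : ℝ, |x t - (1 / T) * ∫ τ in (0:ℝ)..T, x τ| ≤ (T / (2 * Real.sqrt 3)) * M) := by
  refine ⟨abs_sub_mean_le_sqrt_mul_sqrt_integral_deriv_sq hper hT hC1, fun M hM t => ?_⟩
  have hM0 : 0 ≤ M := (abs_nonneg _).trans (hM 0)
  have hsq : ∀ τ, deriv x τ ^ 2 ≤ M ^ 2 := fun τ => by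
    rw [← sq_abs]
    exact pow_le_pow_left₀ (abs_nonneg _) (hM τ) 2
  have hL2 : ∫ τ in (0:ℝ)..T, deriv x τ ^ 2 ≤ T * M ^ 2 := by
    simpa using intervalIntegral.integral_mono_on (μ := volume) hT.le
      (((hC1.continuous_deriv le_rfl).pow 2).intervalIntegrable _ _) intervalIntegrable_const
      fun τ _ => hsq τ
  calc |x t - (1 / T) * ∫ τ in (0:ℝ)..T, x τ|
      ≤ √(T / 12) * √(∫ τ in (0:ℝ)..T, deriv x τ ^ 2) :=
        abs_sub_mean_le_sqrt_mul_sqrt_integral_deriv_sq hper hT hC1 t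
    _ ≤ √(T / 12) * √(T * M ^ 2) := by gcongr
    _ = T / (2 * √3) * M := sqrt_div_twelve_mul_sqrt_mul_sq hT.le hM0
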